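/- Let V_1, …, V_k be complex n × n matrices with Σ_{r=1}^k V_rᴴ * V_r = 1, let Φ : Matrix n n ℂ → Matrix n n ℂ be Φ(a) = Σ_r V_rᴴ * a * V_r, and let ρ ∈ Matrix n n ℂ be positive definite with Tr ρ = 1 and Tr(ρ * Φ(a)) = Tr(ρ * a) for all a. Suppose that for every a ∈ Matrix n n ℂ the Cesàro means (1/N) Σ_{j=0}^{N-1} Φ^j(a) converge entrywise as N → ∞ to E(a). Then E is a ρ-preserving conditional expectation from Matrix n n ℂ onto the fixed-point set { c : Φ(c) = c } (which is a unital star-subalgebra), and it satisfies Φ ∘ E = E ∘ Φ = E and E ∘ E = E. -/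

import Mathlib

/-!
Write `Φ a = ∑ᵣ Vᵣᴴ a Vᵣ`. The Kadison–Schwarz defect
`Φ (aᴴ a) - (Φ a)ᴴ (Φ a) = ∑ᵣ (a Vᵣ - Vᵣ Φ a)ᴴ (a Vᵣ - Vᵣ Φ a)` has nonnegative `ρ`-trace, so by
`ρ`-invariance `Φ` does not increase `Tr (ρ aᴴ a)`; as `ρ` is faithful, the orbits of `Φ` are
bounded and the Cesàro limit `E` satisfies `E ∘ Φ = E`. Being a limit of averages of powers of `Φ`,
`E` is linear, completely positive, `ρ`-preserving, fixes the fixed points of `Φ` and commutes with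
every continuous linear map commuting with `Φ`. For a fixed point `c` the defect has `ρ`-trace
`0`, so `c Vᵣ = Vᵣ c` for all `r`: fixed points form a star-subalgebra, `Φ` is a bimodule map over
it, and hence so is `E`.
-/

open Matrix
open scoped ComplexOrder

/-- A linear map between complex matrix algebras is completely positive if for every `k ≥ 1`
its blockwise application to `k × k` block matrices sends positive semidefinite matrices to
positive semidefinite matrices. -/
def IsCP {n m : Type*} [Fintype n] [Fintype m]
    (Φ : Matrix n n ℂ → Matrix m m ℂ) : Prop :=
  ∀ (k : ℕ) (M : Matrix (n × Fin k) (n × Fin k) ℂ), M.PosSemidef →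
    (Matrix.of fun p q : m × Fin k =>
      Φ (Matrix.of fun i j => M (i, p.2) (j, q.2)) p.1 q.1).PosSemidef

/-- A conditional expectation onto a unital star-subalgebra `S` (given by its carrier set)
is a unital completely positive linear map with range inside `S`, fixing every element of
`S`, and satisfying the `S`-bimodule property. -/
def IsCondExpOn {d : Type*} [Fintype d] [DecidableEq d] (S : Set (Matrix d d ℂ))
    (E : Matrix d d ℂ → Matrix d d ℂ) : Prop :=
  (∀ x y, E (x + y) = E x + E y) ∧
  (∀ (z : ℂ) (x : Matrix d d ℂ), E (z • x) = z • E x) ∧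
  E 1 = 1 ∧
  IsCP E ∧
  (∀ x, E x ∈ S) ∧
  (∀ c ∈ S, E c = c) ∧
  (∀ c₁ ∈ S, ∀ c₂ ∈ S, ∀ x, E (c₁ * x * c₂) = c₁ * E x * c₂)

open Filter Topology Finset

section Cesaro

variable {𝕜 E : Type*} [RCLike 𝕜] [AddCommGroup E] [Module 𝕜 E]

def cesaroMean (T : Module.End 𝕜 E) (N : ℕ) : Module.End 𝕜 E :=
  (N : 𝕜)⁻¹ • ∑ l ∈ range N, T ^ l

variable {T : Module.End 𝕜 E}

lemma cesaroMean_apply_eq_self {x : E} (hx : T x = x) {N : ℕ} (hN : N ≠ 0) :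
    cesaroMean T N x = x := by
  have hpow (l : ℕ) : (T ^ l) x = x := by
    rw [Module.End.pow_apply, Function.iterate_fixed hx]
  simp [cesaroMean, hpow, ← Nat.cast_smul_eq_nsmul 𝕜, smul_smul, hN]

lemma Commute.cesaroMean_right {S : Module.End 𝕜 E} (h : Commute S T) (N : ℕ) :
    Commute S (cesaroMean T N) :=
  ((Commute.sum_right _ _ _) fun l _ => h.pow_right l).smul_right _

lemma cesaroMean_apply_map_sub (N : ℕ) (x : E) :
    cesaroMean T N (T x) - cesaroMean T N x = (N : 𝕜)⁻¹ • ((T ^ N) x - x) := by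
  have hshift (l : ℕ) : (T ^ l) (T x) = (T ^ (l + 1)) x := by
    rw [pow_succ, Module.End.mul_apply]
  simp only [cesaroMean, LinearMap.smul_apply, LinearMap.sum_apply, hshift, ← smul_sub,
    ← Finset.sum_sub_distrib, Finset.sum_range_sub (fun l => (T ^ l) x), pow_zero,
    Module.End.one_apply]

lemma map_cesaroMean_apply_of_map_eq {F : Type*} [AddCommGroup F] [Module 𝕜 F]
    {φ : E →ₗ[𝕜] F} (hφT : ∀ x, φ (T x) = φ x) {N : ℕ} (hN : N ≠ 0) (x : E) :
    φ (cesaroMean T N x) = φ x := by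
  have hpow (l : ℕ) : φ ((T ^ l) x) = φ x := by
    induction l with
    | zero => rfl
    | succ l ih => rw [pow_succ', Module.End.mul_apply, hφT, ih]
  simp [cesaroMean, LinearMap.sum_apply, hpow, ← Nat.cast_smul_eq_nsmul 𝕜, smul_smul, hN]

variable [TopologicalSpace E] {P : E → E}
  (hP : ∀ x, Tendsto (fun N => cesaroMean T N x) atTop (𝓝 (P x)))
include hP

lemma exists_linearMap_eq_of_tendsto_cesaroMean [ContinuousAdd E] [ContinuousConstSMul 𝕜 E]
    [T2Space E] : ∃ L : Module.End 𝕜 E, ⇑L = P :=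
  ⟨linearMapOfTendsto P (cesaroMean T) (tendsto_pi_nhds.2 hP), rfl⟩

lemma apply_eq_self_of_tendsto_cesaroMean [T2Space E] {x : E} (hx : T x = x) : P x = x :=
  tendsto_nhds_unique (hP x) <| tendsto_const_nhds.congr' <|
    (eventually_ne_atTop 0).mono fun _ hN => (cesaroMean_apply_eq_self hx hN).symm

lemma map_apply_comm_of_tendsto_cesaroMean [T2Space E] {S : Module.End 𝕜 E} (hS : Continuous S)
    (hST : Commute S T) (x : E) : S (P x) = P (S x) := by
  refine tendsto_nhds_unique ((hS.tendsto _).comp (hP x)) ?_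
  simpa only [Function.comp_def, ← Module.End.mul_apply, (hST.cesaroMean_right _).eq]
    using hP (S x)

lemma map_apply_eq_of_tendsto_cesaroMean {F : Type*} [AddCommGroup F] [Module 𝕜 F]
    [TopologicalSpace F] [T2Space F] {φ : E →ₗ[𝕜] F} (hφ : Continuous φ)
    (hφT : ∀ x, φ (T x) = φ x) (x : E) : φ (P x) = φ x :=
  tendsto_nhds_unique ((hφ.tendsto _).comp (hP x)) <| tendsto_const_nhds.congr' <|
    (eventually_ne_atTop 0).mono fun _ hN => (map_cesaroMean_apply_of_map_eq hφT hN x).symm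

lemma apply_map_eq_of_tendsto_cesaroMean [IsTopologicalAddGroup E] [ContinuousSMul 𝕜 E]
    [T2Space E] {x : E} (hx : Bornology.IsVonNBounded 𝕜 (Set.range fun N => (T ^ N) x)) :
    P (T x) = P x := by
  have hinv : Tendsto (fun N : ℕ => (N : 𝕜)⁻¹) atTop (𝓝 0) := tendsto_inv_atTop_nhds_zero_nat
  have hdiff : Tendsto (fun N => cesaroMean T N (T x) - cesaroMean T N x) atTop (𝓝 0) := by
    simp only [cesaroMean_apply_map_sub, smul_sub]
    simpa using (hx.smul_tendsto_zero (.of_forall fun N => ⟨N, rfl⟩) hinv).sub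
      (hinv.smul_const x)
  exact sub_eq_zero.1 <| tendsto_nhds_unique ((hP (T x)).sub (hP x)) hdiff

end Cesaro

section CompletelyPositive

open scoped Kronecker

variable {m n p : Type*} [Fintype m] [Fintype n] [Fintype p]

lemma isClosed_setOf_posSemidef : IsClosed {M : Matrix n n ℂ | M.PosSemidef} := by
  simp only [posSemidef_iff_dotProduct_mulVec, Set.ofPred_and, Set.ofPred_forall]
  refine .inter (isClosed_eq (by fun_prop) continuous_id) (isClosed_iInter fun x => ?_)
  exact isClosed_le continuous_const (by fun_prop)

lemma isCP_id : IsCP (id : Matrix n n ℂ → Matrix n n ℂ) := fun _ _ hM => hM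

lemma IsCP.comp {Ψ₁ : Matrix m m ℂ → Matrix p p ℂ} {Ψ₂ : Matrix n n ℂ → Matrix m m ℂ}
    (h₁ : IsCP Ψ₁) (h₂ : IsCP Ψ₂) : IsCP (Ψ₁ ∘ Ψ₂) :=
  fun k M hM => h₁ k _ (h₂ k M hM)

lemma IsCP.iterate {Ψ : Matrix n n ℂ → Matrix n n ℂ} (h : IsCP Ψ) (l : ℕ) : IsCP Ψ^[l] := by
  induction l with
  | zero => exact isCP_id
  | succ l ih => rw [Function.iterate_succ']; exact h.comp ih

lemma IsCP.add {Ψ₁ Ψ₂ : Matrix n n ℂ → Matrix m m ℂ} (h₁ : IsCP Ψ₁) (h₂ : IsCP Ψ₂) :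
    IsCP (Ψ₁ + Ψ₂) :=
  fun k M hM => (h₁ k M hM).add (h₂ k M hM)

lemma IsCP.sum {ι : Type*} {s : Finset ι} {Ψ : ι → Matrix n n ℂ → Matrix m m ℂ}
    (h : ∀ i ∈ s, IsCP (Ψ i)) : IsCP (∑ i ∈ s, Ψ i) := by
  classical
  induction s using Finset.induction_on with
  | empty => rw [Finset.sum_empty]; exact fun _ _ _ => PosSemidef.zero
  | insert i s hi ih =>
    rw [Finset.sum_insert hi]
    exact (h i (Finset.mem_insert_self i s)).add (ih fun j hj => h j (Finset.mem_insert_of_mem hj))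

lemma IsCP.smul {Ψ : Matrix n n ℂ → Matrix m m ℂ} (h : IsCP Ψ) {c : ℂ} (hc : 0 ≤ c) :
    IsCP (c • Ψ) :=
  fun k M hM => (h k M hM).smul hc

lemma isCP_conjTranspose_mul_mul (V : Matrix n m ℂ) :
    IsCP fun a : Matrix n n ℂ => Vᴴ * a * V := by
  intro k M hM
  convert hM.conjTranspose_mul_mul_same (V ⊗ₖ (1 : Matrix (Fin k) (Fin k) ℂ)) using 1
  ext ⟨p₁, p₂⟩ ⟨q₁, q₂⟩
  simp [Matrix.mul_apply, kroneckerMap_apply, Fintype.sum_prod_type, one_apply,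
    apply_ite (starRingEnd ℂ), ite_mul, Finset.sum_mul]

lemma IsCP.of_tendsto {ι : Type*} {l : Filter ι} [l.NeBot] {Ψ : ι → Matrix n n ℂ → Matrix m m ℂ}
    {Ψ' : Matrix n n ℂ → Matrix m m ℂ} (h : ∀ i, IsCP (Ψ i))
    (hlim : ∀ a, Tendsto (fun i => Ψ i a) l (𝓝 (Ψ' a))) : IsCP Ψ' := by
  intro k M hM
  refine Set.mem_ofPred.1 <| isClosed_setOf_posSemidef.mem_of_tendsto (b := l)
    (tendsto_pi_nhds.2 fun p => tendsto_pi_nhds.2 fun q => ?_) (.of_forall fun i => h i k M hM)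
  exact tendsto_pi_nhds.1 (tendsto_pi_nhds.1 (hlim _) p.1) q.1

lemma IsCP.cesaroMean {T : Module.End ℂ (Matrix n n ℂ)} (hT : IsCP T) (N : ℕ) :
    IsCP (cesaroMean T N) := by
  rw [_root_.cesaroMean, LinearMap.coe_smul, LinearMap.coe_sum]
  refine .smul (.sum fun l _ => ?_) (by simp)
  rw [Module.End.coe_pow]
  exact hT.iterate l

end CompletelyPositive

section WeightedTrace

variable {n m : Type*} [Fintype n] [Fintype m] {ρ : Matrix n n ℂ}

lemma Matrix.trace_mul_conjTranspose_mul_self (ρ : Matrix n n ℂ) (b : Matrix m n ℂ) :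
    (ρ * (bᴴ * b)).trace = (b * ρ * bᴴ).trace := by
  rw [trace_mul_cycle', Matrix.mul_assoc]

lemma Matrix.PosSemidef.trace_mul_conjTranspose_mul_self_nonneg (hρ : ρ.PosSemidef)
    (b : Matrix m n ℂ) : 0 ≤ (ρ * (bᴴ * b)).trace :=
  trace_mul_conjTranspose_mul_self ρ b ▸ (hρ.mul_mul_conjTranspose_same b).trace_nonneg

variable [DecidableEq n]

lemma Matrix.PosDef.exists_norm_apply_sq_le (hρ : ρ.PosDef) (i j : n) :
    ∃ C : ℝ, 0 ≤ C ∧ ∀ b : Matrix n n ℂ, ‖b i j‖ ^ 2 ≤ C * (ρ * (bᴴ * b)).trace.re := by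
  -- Cauchy–Schwarz for `⟪x, y⟫ = Tr(y ρ xᴴ)`, tested against the `g` with `⟪g, b⟫ = b i j`.
  let := ρ.toMatrixSeminormedAddCommGroup hρ.posSemidef
  let := ρ.toMatrixInnerProductSpace hρ.posSemidef
  set g : Matrix n n ℂ := (ρ⁻¹ * single j i 1)ᴴ
  have hinner (b : Matrix n n ℂ) : inner ℂ g b = b i j := by
    change (b * ρ * gᴴ).trace = b i j
    rw [conjTranspose_conjTranspose, Matrix.mul_assoc, mul_nonsing_inv_cancel_left _ _
      ((isUnit_iff_isUnit_det ρ).1 hρ.isUnit), trace_mul_single]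
    simp
  have hnorm (b : Matrix n n ℂ) : ‖b‖ ^ 2 = (ρ * (bᴴ * b)).trace.re := by
    rw [@norm_sq_eq_re_inner ℂ, trace_mul_conjTranspose_mul_self]
    rfl
  refine ⟨‖g‖ ^ 2, by positivity, fun b => ?_⟩
  calc ‖b i j‖ ^ 2 = ‖inner ℂ g b‖ ^ 2 := by rw [hinner]
    _ ≤ (‖g‖ * ‖b‖) ^ 2 := by gcongr; exact norm_inner_le_norm g b
    _ = ‖g‖ ^ 2 * (ρ * (bᴴ * b)).trace.re := by rw [mul_pow, hnorm b]

lemma Matrix.PosDef.eq_zero_of_trace_mul_conjTranspose_mul_self_eq_zero (hρ : ρ.PosDef)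
    {b : Matrix n n ℂ} (hb : (ρ * (bᴴ * b)).trace = 0) : b = 0 := by
  ext i j
  obtain ⟨C, -, hC⟩ := hρ.exists_norm_apply_sq_le i j
  simpa [hb] using hC b

lemma Matrix.PosDef.isVonNBounded_setOf_re_trace_le (hρ : ρ.PosDef) (R : ℝ) :
    Bornology.IsVonNBounded ℂ {b : Matrix n n ℂ | (ρ * (bᴴ * b)).trace.re ≤ R} := by
  refine Bornology.isVonNBounded_pi_iff.2 fun i => Bornology.isVonNBounded_pi_iff.2 fun j => ?_
  obtain ⟨C, hC₀, hC⟩ := hρ.exists_norm_apply_sq_le i j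
  rw [NormedSpace.isVonNBounded_iff, isBounded_iff_forall_norm_le]
  refine ⟨√(C * R), ?_⟩
  rintro _ ⟨_, ⟨b, hb, rfl⟩, rfl⟩
  exact Real.le_sqrt_of_sq_le <| (hC b).trans (mul_le_mul_of_nonneg_left hb hC₀)

end WeightedTrace

section Kraus

variable {κ n : Type*} [Fintype κ] [Fintype n]

def krausMap (V : κ → Matrix n n ℂ) : Matrix n n ℂ →ₗ[ℂ] Matrix n n ℂ where
  toFun a := ∑ r, (V r)ᴴ * a * V r
  map_add' a b := by simp [Matrix.mul_add, Matrix.add_mul, Finset.sum_add_distrib]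
  map_smul' c a := by simp [Finset.smul_sum]

variable (V : κ → Matrix n n ℂ)

lemma krausMap_apply (a : Matrix n n ℂ) : krausMap V a = ∑ r, (V r)ᴴ * a * V r := rfl

lemma krausMap_conjTranspose (a : Matrix n n ℂ) : krausMap V aᴴ = (krausMap V a)ᴴ := by
  simp [krausMap_apply, conjTranspose_sum, Matrix.mul_assoc]

lemma isCP_krausMap : IsCP (krausMap V) := by
  have hsum : ⇑(krausMap V) = ∑ r, fun a => (V r)ᴴ * a * V r := by
    ext a : 1
    simp [krausMap_apply]
  rw [hsum]
  exact .sum fun r _ => isCP_conjTranspose_mul_mul (V r)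

variable [DecidableEq n]

lemma krausMap_one (hV : ∑ r, (V r)ᴴ * V r = 1) : krausMap V 1 = 1 := by
  simpa [krausMap_apply] using hV

lemma krausMap_conjTranspose_mul_self_sub (hV : ∑ r, (V r)ᴴ * V r = 1) (a : Matrix n n ℂ) :
    krausMap V (aᴴ * a) - (krausMap V a)ᴴ * krausMap V a =
      ∑ r, (a * V r - V r * krausMap V a)ᴴ * (a * V r - V r * krausMap V a) := by
  have h (r : κ) : (a * V r - V r * krausMap V a)ᴴ * (a * V r - V r * krausMap V a) =
      (V r)ᴴ * (aᴴ * a) * V r - (V r)ᴴ * aᴴ * V r * krausMap V a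
        - (krausMap V a)ᴴ * ((V r)ᴴ * a * V r)
        + (krausMap V a)ᴴ * ((V r)ᴴ * V r) * krausMap V a := by
    simp only [conjTranspose_sub, conjTranspose_mul, Matrix.sub_mul, Matrix.mul_sub,
      Matrix.mul_assoc]
    abel
  simp only [h, Finset.sum_add_distrib, Finset.sum_sub_distrib, ← Finset.sum_mul,
    ← Finset.mul_sum, hV, ← krausMap_apply, krausMap_conjTranspose]
  rw [Matrix.mul_one]
  abel

variable {V} {ρ : Matrix n n ℂ} (hV : ∑ r, (V r)ᴴ * V r = 1)
  (hpres : ∀ a, (ρ * krausMap V a).trace = (ρ * a).trace)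
include hV hpres

lemma trace_mul_krausMap_conjTranspose_mul_self_le (hρ : ρ.PosSemidef) (a : Matrix n n ℂ) :
    (ρ * ((krausMap V a)ᴴ * krausMap V a)).trace ≤ (ρ * (aᴴ * a)).trace := by
  have hdefect := krausMap_conjTranspose_mul_self_sub V hV a
  have h0 : 0 ≤ (ρ * (krausMap V (aᴴ * a) - (krausMap V a)ᴴ * krausMap V a)).trace := by
    rw [hdefect, Finset.mul_sum, trace_sum]
    exact Finset.sum_nonneg fun r _ => hρ.trace_mul_conjTranspose_mul_self_nonneg _
  rwa [Matrix.mul_sub, trace_sub, hpres, sub_nonneg] at h0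

lemma commute_of_krausMap_eq_self (hρ : ρ.PosDef) {c : Matrix n n ℂ} (hc : krausMap V c = c)
    (r : κ) : Commute c (V r) := by
  have hsum : ∑ r, (ρ * ((c * V r - V r * c)ᴴ * (c * V r - V r * c))).trace = 0 := by
    have hdefect := krausMap_conjTranspose_mul_self_sub V hV c
    rw [hc] at hdefect
    rw [← trace_sum, ← Finset.mul_sum, ← hdefect, Matrix.mul_sub, trace_sub, hpres, sub_self]
  have hr := (Finset.sum_eq_zero_iff_of_nonneg fun r _ =>
    hρ.posSemidef.trace_mul_conjTranspose_mul_self_nonneg _).1 hsum r (Finset.mem_univ r)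
  exact sub_eq_zero.1 (hρ.eq_zero_of_trace_mul_conjTranspose_mul_self_eq_zero hr)

lemma krausMap_mul_mul_of_krausMap_eq_self (hρ : ρ.PosDef) {c₁ c₂ : Matrix n n ℂ}
    (h₁ : krausMap V c₁ = c₁) (h₂ : krausMap V c₂ = c₂) (x : Matrix n n ℂ) :
    krausMap V (c₁ * x * c₂) = c₁ * krausMap V x * c₂ := by
  have h₁' (r : κ) : (V r)ᴴ * c₁ = c₁ * (V r)ᴴ := by
    have := commute_of_krausMap_eq_self hV hpres hρ
      (by rw [krausMap_conjTranspose, h₁] : krausMap V c₁ᴴ = c₁ᴴ) r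
    simpa using congrArg conjTranspose this.eq
  simp only [krausMap_apply, Finset.mul_sum, Finset.sum_mul]
  refine Finset.sum_congr rfl fun r _ => ?_
  calc (V r)ᴴ * (c₁ * x * c₂) * V r = (V r)ᴴ * c₁ * x * (c₂ * V r) := by
        simp only [Matrix.mul_assoc]
    _ = c₁ * ((V r)ᴴ * x * V r) * c₂ := by
        rw [h₁' r, (commute_of_krausMap_eq_self hV hpres hρ h₂ r).eq]
        simp only [Matrix.mul_assoc]

lemma isVonNBounded_range_krausMap_pow (hρ : ρ.PosDef) (a : Matrix n n ℂ) :
    Bornology.IsVonNBounded ℂ (Set.range fun N => (krausMap V ^ N) a) := by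
  refine (hρ.isVonNBounded_setOf_re_trace_le (ρ * (aᴴ * a)).trace.re).subset
    (Set.range_subset_iff.2 fun N => ?_)
  induction N with
  | zero => simp
  | succ N ih =>
    rw [Set.mem_ofPred] at ih ⊢
    rw [pow_succ', Module.End.mul_apply]
    exact le_trans (Complex.re_le_re
      (trace_mul_krausMap_conjTranspose_mul_self_le hV hpres hρ.posSemidef _)) ih

def fixedPointStarSubalgebra (hρ : ρ.PosDef) : StarSubalgebra ℂ (Matrix n n ℂ) where
  carrier := {c | krausMap V c = c}
  mul_mem' {a b} (ha : krausMap V a = a) (hb : krausMap V b = b) := by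
    simpa [ha] using krausMap_mul_mul_of_krausMap_eq_self hV hpres hρ (krausMap_one V hV) hb a
  add_mem' {a b} ha hb := by simp_all
  algebraMap_mem' z := by simp [Algebra.algebraMap_eq_smul_one, krausMap_one V hV]
  star_mem' {a} ha := by simp_all [star_eq_conjTranspose, krausMap_conjTranspose]

end Kraus

open Filter in
theorem cesaro_limit_is_condExp_onto_fixed_points_general
    {n k : ℕ} (V : Fin k → Matrix (Fin n) (Fin n) ℂ)
    (hV : ∑ r, (V r)ᴴ * V r = 1)
    (ρ : Matrix (Fin n) (Fin n) ℂ) (hρ : ρ.PosDef) :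
    let Φ : Matrix (Fin n) (Fin n) ℂ → Matrix (Fin n) (Fin n) ℂ :=
      fun a => ∑ r, (V r)ᴴ * a * V r
    ∀ (hpres : ∀ a, (ρ * Φ a).trace = (ρ * a).trace)
      (E : Matrix (Fin n) (Fin n) ℂ → Matrix (Fin n) (Fin n) ℂ),
      (∀ (a : Matrix (Fin n) (Fin n) ℂ) (i j : Fin n),
        Tendsto (fun N : ℕ => (N : ℂ)⁻¹ * ∑ l ∈ Finset.range N, (Φ^[l] a) i j)
          atTop (nhds (E a i j))) →
      IsCondExpOn {c : Matrix (Fin n) (Fin n) ℂ | Φ c = c} E ∧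
      (∀ x, (ρ * E x).trace = (ρ * x).trace) ∧
      (∀ a, Φ (E a) = E a) ∧ (∀ a, E (Φ a) = E a) ∧ (∀ a, E (E a) = E a) ∧
      ∃ S : StarSubalgebra ℂ (Matrix (Fin n) (Fin n) ℂ),
        (S : Set (Matrix (Fin n) (Fin n) ℂ)) =
          {c : Matrix (Fin n) (Fin n) ℂ | Φ c = c} := by
  intro Φ hpres E hE
  change ∀ a, (ρ * krausMap V a).trace = (ρ * a).trace at hpres
  change ∀ a i j, Tendsto (fun N : ℕ => (N : ℂ)⁻¹ * ∑ l ∈ range N, ((krausMap V)^[l] a) i j)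
    atTop (𝓝 (E a i j)) at hE
  have hP (a : Matrix (Fin n) (Fin n) ℂ) :
      Tendsto (fun N => cesaroMean (krausMap V) N a) atTop (𝓝 (E a)) :=
    tendsto_pi_nhds.2 fun i => tendsto_pi_nhds.2 fun j => by
      simpa [cesaroMean, LinearMap.sum_apply, Module.End.coe_pow, Matrix.sum_apply] using hE a i j
  obtain ⟨L, rfl⟩ := exists_linearMap_eq_of_tendsto_cesaroMean hP
  have hL_map (a) : L (krausMap V a) = L a :=
    apply_map_eq_of_tendsto_cesaroMean hP (isVonNBounded_range_krausMap_pow hV hpres hρ a)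
  have hL_fixed {c} (hc : krausMap V c = c) : L c = c := apply_eq_self_of_tendsto_cesaroMean hP hc
  have hmap_L (a) : krausMap V (L a) = L a :=
    (map_apply_comm_of_tendsto_cesaroMean hP (LinearMap.continuous_of_finiteDimensional _)
      (Commute.refl _) a).trans (hL_map a)
  have hL_trace (a) : (ρ * L a).trace = (ρ * a).trace :=
    map_apply_eq_of_tendsto_cesaroMean hP (φ := (traceLinearMap _ ℂ ℂ).comp (LinearMap.mulLeft ℂ ρ))
      (LinearMap.continuous_of_finiteDimensional _) hpres a
  have hL_bimod {c₁} (h₁ : krausMap V c₁ = c₁) {c₂} (h₂ : krausMap V c₂ = c₂) (x) :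
      L (c₁ * x * c₂) = c₁ * L x * c₂ :=
    (map_apply_comm_of_tendsto_cesaroMean hP (S := LinearMap.mulLeftRight ℂ (c₁, c₂))
      (LinearMap.continuous_of_finiteDimensional _) (LinearMap.ext fun y =>
        (krausMap_mul_mul_of_krausMap_eq_self hV hpres hρ h₁ h₂ y).symm) x).symm
  exact ⟨⟨map_add L, map_smul L, hL_fixed (krausMap_one V hV),
      .of_tendsto (fun N => (isCP_krausMap V).cesaroMean N) hP, hmap_L, fun c => hL_fixed,
      fun c₁ h₁ c₂ h₂ => hL_bimod h₁ h₂⟩,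
    hL_trace, hmap_L, hL_map, fun a => hL_fixed (hmap_L a),
    fixedPointStarSubalgebra hV hpres hρ, rfl⟩

open Filter in
/-- The Cesàro means of a `ρ`-preserving unital completely positive map converge to the
`ρ`-preserving conditional expectation onto its fixed-point subalgebra. -/
theorem cesaro_limit_is_condExp_onto_fixed_points
    {n k : ℕ} (V : Fin k → Matrix (Fin n) (Fin n) ℂ)
    (hV : ∑ r, (V r)ᴴ * V r = 1)
    (ρ : Matrix (Fin n) (Fin n) ℂ) (hρ : ρ.PosDef) (hρtr : ρ.trace = 1) :
    let Φ : Matrix (Fin n) (Fin n) ℂ → Matrix (Fin n) (Fin n) ℂ :=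
      fun a => ∑ r, (V r)ᴴ * a * V r
    ∀ (hpres : ∀ a, (ρ * Φ a).trace = (ρ * a).trace)
      (E : Matrix (Fin n) (Fin n) ℂ → Matrix (Fin n) (Fin n) ℂ),
      (∀ (a : Matrix (Fin n) (Fin n) ℂ) (i j : Fin n),
        Tendsto (fun N : ℕ => (N : ℂ)⁻¹ * ∑ l ∈ Finset.range N, (Φ^[l] a) i j)
          atTop (nhds (E a i j))) →
      IsCondExpOn {c : Matrix (Fin n) (Fin n) ℂ | Φ c = c} E ∧
      (∀ x, (ρ * E x).trace = (ρ * x).trace) ∧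
      (∀ a, Φ (E a) = E a) ∧ (∀ a, E (Φ a) = E a) ∧ (∀ a, E (E a) = E a) ∧
      ∃ S : StarSubalgebra ℂ (Matrix (Fin n) (Fin n) ℂ),
        (S : Set (Matrix (Fin n) (Fin n) ℂ)) =
          {c : Matrix (Fin n) (Fin n) ℂ | Φ c = c} :=
  cesaro_limit_is_condExp_onto_fixed_points_general V hV ρ hρ
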